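/- Let G be a finite connected graph with a signature λ: E(G) → {−1, +1}. Then the following are equivalent: (1) every cycle of G has an even number of edges e with λ(e) = −1; (2) there exists σ: V(G) → {−1, +1} with λ({u,v}) = σ(u)·σ(v) for every edge {u,v}; (3) the set of edges with λ(e) = −1 forms an edge cut of G (i.e., the set of edges between S and V(G)∖S for some S ⊆ V(G)). -/

import Mathlib

/-!
Multiply the signs along walks. Removing a closed subwalk from a walk changes its sign by the
sign of a cycle or of an edge traversed twice, so if all cycles are positive then so is every
closed walk. Then the sign of any walk from a fixed root of each component to `v` defines a
potential `σ v` with `λ uv = σ u σ v`, and `S = {v | σ v = 1}` is the cut; conversely the sign of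
a walk telescopes to `σ u σ v`, which is `1` on closed walks.
-/

open SimpleGraph

namespace SimpleGraph.Walk

variable {V M : Type*} {G : SimpleGraph V}

def edgeProd [Monoid M] (lam : Sym2 V → M) {u v : V} (p : G.Walk u v) : M :=
  (p.edges.map lam).prod

section Monoid

variable [Monoid M] (lam : Sym2 V → M)

@[simp]
theorem edgeProd_nil {u : V} : (nil : G.Walk u u).edgeProd lam = 1 := rfl

@[simp]
theorem edgeProd_cons {u v w : V} (h : G.Adj u v) (p : G.Walk v w) :
    (cons h p).edgeProd lam = lam s(u, v) * p.edgeProd lam := by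
  simp [edgeProd]

theorem edgeProd_append {u v w : V} (p : G.Walk u v) (q : G.Walk v w) :
    (p.append q).edgeProd lam = p.edgeProd lam * q.edgeProd lam := by
  simp [edgeProd]

variable {lam}

theorem IsPath.edgeProd_cons_eq_one {u w : V} {q : G.Walk w u} (hq : q.IsPath) (h : G.Adj u w)
    (hsq : ∀ e ∈ G.edgeSet, lam e * lam e = 1)
    (hcyc : ∀ (v : V) (c : G.Walk v v), c.IsCycle → c.edgeProd lam = 1) :
    (cons h q).edgeProd lam = 1 := by
  by_cases he : s(u, w) ∈ q.edges
  · rw [Sym2.eq_swap] at he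
    rw [hq.eq_adj_toWalk_of_mem_edges he]
    simpa [Sym2.eq_swap] using hsq _ h
  · exact hcyc u _ ((cons_isCycle_iff q h).mpr ⟨hq, he⟩)

theorem edgeProd_bypass [DecidableEq V] (hsq : ∀ e ∈ G.edgeSet, lam e * lam e = 1)
    (hcyc : ∀ (v : V) (c : G.Walk v v), c.IsCycle → c.edgeProd lam = 1) {u v : V}
    (p : G.Walk u v) : p.bypass.edgeProd lam = p.edgeProd lam := by
  induction p with
  | nil => rfl
  | @cons u w v h p ih =>
    rw [bypass, edgeProd_cons, ← ih]
    split_ifs with hu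
    · have hloop := (p.bypass_isPath.takeUntil hu).edgeProd_cons_eq_one h hsq hcyc
      conv_rhs => rw [← p.bypass.take_spec hu, edgeProd_append, ← mul_assoc]
      rw [← edgeProd_cons lam h, hloop, one_mul]
    · exact edgeProd_cons lam h _

theorem edgeProd_eq_one_of_isCycle_edgeProd_eq_one (hsq : ∀ e ∈ G.edgeSet, lam e * lam e = 1)
    (hcyc : ∀ (v : V) (c : G.Walk v v), c.IsCycle → c.edgeProd lam = 1) {v : V}
    (c : G.Walk v v) : c.edgeProd lam = 1 := by
  classical
  rw [← edgeProd_bypass hsq hcyc, (c.bypass_isPath.nil_iff_eq.mpr rfl).eq_nil, edgeProd_nil]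

end Monoid
theorem edgeProd_reverse [CommMonoid M] (lam : Sym2 V → M) {u v : V} (p : G.Walk u v) :
    p.reverse.edgeProd lam = p.edgeProd lam := by
  simp [edgeProd, List.prod_reverse]

@[simp]
theorem edgeProd_copy [Monoid M] (lam : Sym2 V → M) {u v u' v' : V} (p : G.Walk u v)
    (hu : u = u') (hv : v = v') : (p.copy hu hv).edgeProd lam = p.edgeProd lam := by
  simp [edgeProd]

theorem edgeProd_eq_mul_of_coboundary [CommMonoid M] {lam : Sym2 V → M} {σ : V → M}
    (hσ : ∀ v, σ v * σ v = 1) (hlam : ∀ u v, G.Adj u v → lam s(u, v) = σ u * σ v) {u v : V}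
    (p : G.Walk u v) : p.edgeProd lam = σ u * σ v := by
  induction p with
  | nil => simp [hσ]
  | @cons u w v h p ih =>
    rw [edgeProd_cons, ih, hlam u w h, mul_assoc, ← mul_assoc (σ w), hσ, one_mul]

theorem edgeProd_eq_neg_one_pow {lam : Sym2 V → ℤ} (hval : ∀ e ∈ G.edgeSet, lam e = 1 ∨ lam e = -1)
    {u v : V} (p : G.Walk u v) :
    p.edgeProd lam = (-1) ^ (p.edges.filter (fun e => decide (lam e = -1))).length := by
  induction p with
  | nil => rfl
  | @cons u w v h p ih =>
    rw [edgeProd_cons, ih, edges_cons, List.filter_cons]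
    rcases hval s(u, w) h with he | he <;> simp [he, pow_succ, mul_comm]

theorem edgeProd_eq_one_iff_even {lam : Sym2 V → ℤ}
    (hval : ∀ e ∈ G.edgeSet, lam e = 1 ∨ lam e = -1) {u v : V} (p : G.Walk u v) :
    p.edgeProd lam = 1 ↔ Even (p.edges.filter (fun e => decide (lam e = -1))).length := by
  rw [edgeProd_eq_neg_one_pow hval, neg_one_pow_eq_one_iff_even (by norm_num)]

theorem edgeProd_eq_one_or_eq_neg_one {lam : Sym2 V → ℤ}
    (hval : ∀ e ∈ G.edgeSet, lam e = 1 ∨ lam e = -1) {u v : V} (p : G.Walk u v) :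
    p.edgeProd lam = 1 ∨ p.edgeProd lam = -1 := by
  rw [edgeProd_eq_neg_one_pow hval]
  exact neg_one_pow_eq_or ℤ _

end SimpleGraph.Walk

namespace SimpleGraph

variable {V : Type*} {G : SimpleGraph V} {lam : Sym2 V → ℤ}

theorem exists_sign_potential_of_edgeProd_eq_one
    (hval : ∀ e ∈ G.edgeSet, lam e = 1 ∨ lam e = -1)
    (hclosed : ∀ (v : V) (c : G.Walk v v), c.edgeProd lam = 1) :
    ∃ σ : V → ℤ, (∀ v, σ v = 1 ∨ σ v = -1) ∧ ∀ u v, G.Adj u v → lam s(u, v) = σ u * σ v := by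
  let root : V → V := fun v => (G.connectedComponentMk v).out
  have hroot : ∀ v, G.Reachable (root v) v := fun v => ConnectedComponent.exact (Quot.out_eq _)
  let path : ∀ v, G.Walk (root v) v := fun v => (hroot v).some
  refine ⟨fun v => (path v).edgeProd lam, fun v => (path v).edgeProd_eq_one_or_eq_neg_one hval,
    fun u v h => ?_⟩
  have hsame : root v = root u := by
    simp only [root, ConnectedComponent.connectedComponentMk_eq_of_adj h]
  have hloop := hclosed _ ((path u).append (Walk.cons h ((path v).reverse.copy rfl hsame)))
  rw [Walk.edgeProd_append, Walk.edgeProd_cons, Walk.edgeProd_copy, Walk.edgeProd_reverse]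
    at hloop
  rcases (path u).edgeProd_eq_one_or_eq_neg_one hval with hu | hu <;>
    rcases (path v).edgeProd_eq_one_or_eq_neg_one hval with hv | hv <;>
    simp only [hu, hv] at hloop ⊢ <;> linarith

theorem isCycle_edgeProd_eq_one_iff_exists_sign_potential
    (hval : ∀ e ∈ G.edgeSet, lam e = 1 ∨ lam e = -1) :
    (∀ (v : V) (c : G.Walk v v), c.IsCycle → c.edgeProd lam = 1) ↔
      ∃ σ : V → ℤ, (∀ v, σ v = 1 ∨ σ v = -1) ∧ ∀ u v, G.Adj u v → lam s(u, v) = σ u * σ v := by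
  have hsq : ∀ e ∈ G.edgeSet, lam e * lam e = 1 := fun e he => by
    rcases hval e he with h | h <;> simp [h]
  refine ⟨fun hcyc => exists_sign_potential_of_edgeProd_eq_one hval fun v c =>
    Walk.edgeProd_eq_one_of_isCycle_edgeProd_eq_one hsq hcyc c, ?_⟩
  rintro ⟨σ, hσ, hlam⟩ v c -
  have hσsq : ∀ v, σ v * σ v = 1 := fun v => by rcases hσ v with h | h <;> simp [h]
  rw [Walk.edgeProd_eq_mul_of_coboundary hσsq hlam, hσsq]

theorem exists_sign_potential_iff_exists_cut (hval : ∀ e ∈ G.edgeSet, lam e = 1 ∨ lam e = -1) :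
    (∃ σ : V → ℤ, (∀ v, σ v = 1 ∨ σ v = -1) ∧ ∀ u v, G.Adj u v → lam s(u, v) = σ u * σ v) ↔
      ∃ S : Set V, ∀ u v, G.Adj u v → (lam s(u, v) = -1 ↔ ((u ∈ S) ↔ v ∉ S)) := by
  constructor
  · rintro ⟨σ, hσ, hlam⟩
    refine ⟨{v | σ v = 1}, fun u v h => ?_⟩
    rw [hlam u v h]
    rcases hσ u with hu | hu <;> rcases hσ v with hv | hv <;> simp [hu, hv]
  · rintro ⟨S, hS⟩
    classical
    refine ⟨fun v => if v ∈ S then 1 else -1, fun v => by dsimp only; split_ifs <;> simp, fun u v h => ?_⟩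
    have hcut := hS u v h
    rcases hval s(u, v) h with he | he <;> by_cases hu : u ∈ S <;> by_cases hv : v ∈ S <;>
      simp_all

end SimpleGraph

theorem stmt19_general {V : Type*} (G : SimpleGraph V)
    (lam : Sym2 V → ℤ) (hval : ∀ e ∈ G.edgeSet, lam e = 1 ∨ lam e = -1) :
    ((∀ (v : V) (w : G.Walk v v), w.IsCycle →
        Even (w.edges.filter (fun e => decide (lam e = -1))).length) ↔
      (∃ σ : V → ℤ, (∀ v, σ v = 1 ∨ σ v = -1) ∧
        ∀ u v : V, G.Adj u v → lam s(u, v) = σ u * σ v)) ∧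
    ((∀ (v : V) (w : G.Walk v v), w.IsCycle →
        Even (w.edges.filter (fun e => decide (lam e = -1))).length) ↔
      (∃ S : Set V, ∀ u v : V, G.Adj u v →
        (lam s(u, v) = -1 ↔ ((u ∈ S) ↔ v ∉ S)))) := by
  have hbalanced := isCycle_edgeProd_eq_one_iff_exists_sign_potential hval
  simp only [Walk.edgeProd_eq_one_iff_even hval] at hbalanced
  exact ⟨hbalanced, hbalanced.trans (exists_sign_potential_iff_exists_cut hval)⟩

/-- Harary's balance criterion for a signature `λ : E(G) → {−1,+1}` on a finite connected
graph: (1) every cycle has an even number of `−1`-edges iff (2) `λ` is a coboundary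
`λ{u,v} = σ(u)σ(v)` iff (3) the `−1`-edges form an edge cut. -/
theorem stmt19 {V : Type*} [Fintype V] (G : SimpleGraph V) (hconn : G.Connected)
    (lam : Sym2 V → ℤ) (hval : ∀ e ∈ G.edgeSet, lam e = 1 ∨ lam e = -1) :
    ((∀ (v : V) (w : G.Walk v v), w.IsCycle →
        Even (w.edges.filter (fun e => decide (lam e = -1))).length) ↔
      (∃ σ : V → ℤ, (∀ v, σ v = 1 ∨ σ v = -1) ∧
        ∀ u v : V, G.Adj u v → lam s(u, v) = σ u * σ v)) ∧
    ((∀ (v : V) (w : G.Walk v v), w.IsCycle →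
        Even (w.edges.filter (fun e => decide (lam e = -1))).length) ↔
      (∃ S : Set V, ∀ u v : V, G.Adj u v →
        (lam s(u, v) = -1 ↔ ((u ∈ S) ↔ v ∉ S)))) :=
  stmt19_general G lam hval
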